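/- arXiv:1110.4936 — 2 statements merged into one kernel-verified Lean document; each statement's English description precedes it below -/
import Mathlib

section
/- The theta function vanishes at odd characteristics: if n, m ∈ ℤ^g satisfy nᵀ·m = Σ_i n_i m_i ∈ 2ℤ + 1 (odd), and c = (n + τm)/2 ∈ ℂ^g (where (τm)_i = Σ_j τ_{ij} m_j), then θ(c | τ) = 0. -/
/-!
Reindexing the theta series by the involution `k ↦ -k - m` of `ℤ^g` multiplies its term at
`u` by `exp(-πi (2k + m)·(2u - τm))` when `τ` is symmetric. At the characteristic `c` we have
`2c - τm = n`, so this factor is `exp(-πi (2 k·n + m·n)) = -1` because `m·n` is odd; hence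
`θ(c|τ) = -θ(c|τ)`.
-/

open Complex Matrix

/-- The general term of the Riemann theta series. -/
noncomputable def riemannThetaTerm {g : ℕ} (τ : Matrix (Fin g) (Fin g) ℂ)
    (u : Fin g → ℂ) (n : Fin g → ℤ) : ℂ :=
  Complex.exp (2 * (Real.pi : ℂ) * Complex.I * (∑ i, (n i : ℂ) * u i)
    + (Real.pi : ℂ) * Complex.I * (∑ i, ∑ j, (n i : ℂ) * τ i j * (n j : ℂ)))

/-- The Riemann theta function `θ(u|τ) = Σ_{n ∈ ℤ^g} exp(2πi n·u + πi nᵀτn)`. -/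
noncomputable def riemannTheta {g : ℕ} (τ : Matrix (Fin g) (Fin g) ℂ)
    (u : Fin g → ℂ) : ℂ :=
  ∑' n : Fin g → ℤ, riemannThetaTerm τ u n

open Real

theorem tsum_eq_zero_of_comp_equiv_eq_neg {α β : Type*} [AddCommGroup α] [TopologicalSpace α]
    [IsTopologicalAddGroup α] [T2Space α] [IsAddTorsionFree α] (e : β ≃ β) {f : β → α}
    (hf : ∀ b, f (e b) = -f b) : ∑' b, f b = 0 :=
  self_eq_neg.mp <| calc
    ∑' b, f b = ∑' b, f (e b) := (e.tsum_eq f).symm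
    _ = -∑' b, f b := by simp only [hf, tsum_neg]

theorem Matrix.IsSymm.dotProduct_mulVec_comm {n R : Type*} [Fintype n] [CommSemiring R]
    {A : Matrix n n R} (hA : A.IsSymm) (v w : n → R) : v ⬝ᵥ A *ᵥ w = w ⬝ᵥ A *ᵥ v := by
  rw [dotProduct_mulVec, ← mulVec_transpose, hA.eq, dotProduct_comm]

theorem Matrix.IsSymm.quadratic_neg_sub {n R : Type*} [Fintype n] [CommRing R]
    {A : Matrix n n R} (hA : A.IsSymm) (u v w : n → R) :
    2 * ((-v - w) ⬝ᵥ u) + (-v - w) ⬝ᵥ A *ᵥ (-v - w)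
      = 2 * (v ⬝ᵥ u) + v ⬝ᵥ A *ᵥ v - (2 • v + w) ⬝ᵥ (2 • u - A *ᵥ w) := by
  simp only [sub_eq_add_neg, dotProduct_add, add_dotProduct, neg_dotProduct, dotProduct_neg,
    mulVec_add, mulVec_neg, smul_dotProduct, dotProduct_smul]
  rw [hA.dotProduct_mulVec_comm w v]
  ring

theorem Complex.exp_pi_mul_I_mul_int_of_odd {z : ℤ} (hz : Odd z) : cexp (π * I * z) = -1 := by
  rw [mul_comm, exp_int_mul, exp_pi_mul_I, hz.neg_one_zpow]

theorem riemannThetaTerm_eq_exp {g : ℕ} (τ : Matrix (Fin g) (Fin g) ℂ) (u : Fin g → ℂ)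
    (k : Fin g → ℤ) :
    riemannThetaTerm τ u k
      = cexp (π * I * (2 * ((Int.cast ∘ k) ⬝ᵥ u) + (Int.cast ∘ k) ⬝ᵥ τ *ᵥ (Int.cast ∘ k))) := by
  have hquad : (Int.cast ∘ k) ⬝ᵥ τ *ᵥ (Int.cast ∘ k) = ∑ i, ∑ j, (k i : ℂ) * τ i j * k j := by
    simp only [dotProduct, mulVec, Function.comp_apply, Finset.mul_sum, mul_assoc]
  rw [riemannThetaTerm, hquad]
  simp only [dotProduct, Function.comp_apply]
  congr 1
  ring

theorem riemannThetaTerm_neg_sub {g : ℕ} {τ : Matrix (Fin g) (Fin g) ℂ} (hτ : τ.IsSymm)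
    (u : Fin g → ℂ) (k m : Fin g → ℤ) :
    riemannThetaTerm τ u (-k - m)
      = cexp (-(π * I) * ((2 • (Int.cast ∘ k) + Int.cast ∘ m) ⬝ᵥ (2 • u - τ *ᵥ (Int.cast ∘ m))))
        * riemannThetaTerm τ u k := by
  have hcast : (Int.cast ∘ (-k - m) : Fin g → ℂ) = -(Int.cast ∘ k) - Int.cast ∘ m := by
    funext i; simp
  rw [riemannThetaTerm_eq_exp, riemannThetaTerm_eq_exp, ← Complex.exp_add, hcast,
    hτ.quadratic_neg_sub]
  congr 1
  ring

theorem riemannThetaTerm_neg_sub_of_odd {g : ℕ} {τ : Matrix (Fin g) (Fin g) ℂ} (hτ : τ.IsSymm)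
    {n m : Fin g → ℤ} (hodd : Odd (n ⬝ᵥ m)) {c : Fin g → ℂ}
    (hc : 2 • c - τ *ᵥ (Int.cast ∘ m) = Int.cast ∘ n) (k : Fin g → ℤ) :
    riemannThetaTerm τ c (-k - m) = -riemannThetaTerm τ c k := by
  have hcast : (2 • (Int.cast ∘ k) + Int.cast ∘ m : Fin g → ℂ) ⬝ᵥ Int.cast ∘ n
      = (((2 • k + m) ⬝ᵥ n : ℤ) : ℂ) := by
    simp [dotProduct]
  have hodd' : Odd ((2 • k + m) ⬝ᵥ n) := by
    rw [add_dotProduct, smul_dotProduct, dotProduct_comm m]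
    exact Even.add_odd ⟨_, two_nsmul _⟩ hodd
  rw [riemannThetaTerm_neg_sub hτ, hc, hcast, neg_mul, ← mul_neg, ← Int.cast_neg,
    exp_pi_mul_I_mul_int_of_odd hodd'.neg, neg_one_mul]

theorem riemannTheta_vanishes_at_odd_characteristics_general (g : ℕ)
    (τ : Matrix (Fin g) (Fin g) ℂ) (hsym : τ.IsSymm)
    (n m : Fin g → ℤ) (hodd : Odd (∑ i, n i * m i))
    (c : Fin g → ℂ)
    (hc : ∀ i, c i = ((n i : ℂ) + ∑ j, τ i j * (m j : ℂ)) / 2) :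
    riemannTheta τ c = 0 := by
  have hchar : 2 • c - τ *ᵥ (Int.cast ∘ m) = Int.cast ∘ n := by
    funext i
    simp only [Pi.sub_apply, Pi.smul_apply, hc i, mulVec, dotProduct, Function.comp_apply]
    ring
  exact tsum_eq_zero_of_comp_equiv_eq_neg ((Equiv.neg _).trans (Equiv.subRight m))
    (riemannThetaTerm_neg_sub_of_odd hsym hodd hchar)

/-- The theta function vanishes at odd characteristics: if `n, m ∈ ℤ^g` have
`nᵀ·m` odd and `c = (n + τm)/2`, then `θ(c | τ) = 0`. -/
theorem riemannTheta_vanishes_at_odd_characteristics (g : ℕ) (hg : 1 ≤ g)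
    (τ : Matrix (Fin g) (Fin g) ℂ) (hsym : τ.IsSymm)
    (hpos : (Matrix.of fun i j => (τ i j).im).PosDef)
    (n m : Fin g → ℤ) (hodd : Odd (∑ i, n i * m i))
    (c : Fin g → ℂ)
    (hc : ∀ i, c i = ((n i : ℂ) + ∑ j, τ i j * (m j : ℂ)) / 2) :
    riemannTheta τ c = 0 :=
  riemannTheta_vanishes_at_odd_characteristics_general g τ hsym n m hodd c hc
end

section
/- Heat equation for the Riemann theta function: for every symmetric g×g complex matrix A and every u ∈ ℂ^g, the function s ↦ θ(u | τ + sA) of the real variable s is differentiable at s = 0 (note that Im(τ + sA) remains positive definite for |s| small), and its derivative at s = 0 equals (1/(4πi)) Σ_{i,j=1}^g A_{ij} · (∂²θ/∂u_i∂u_j)(u | τ). (This is the directional form of the identity ∂_{τ_{ij}}θ = (1/4iπ) ∂_{u_i}∂_{u_j}θ, where τ_{ij} and τ_{ji} are considered independent.) -/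
open Complex Matrix

/-- Partial derivative `∂f/∂u_i` of a function `f : ℂ^g → ℂ` at a point `u`. -/
noncomputable def pderivAlong {g : ℕ} (f : (Fin g → ℂ) → ℂ) (i : Fin g)
    (u : Fin g → ℂ) : ℂ :=
  deriv (fun t : ℂ => f (u + t • (Pi.single i 1 : Fin g → ℂ))) 0

/-!
Every term `exp (2πi n·u + πi nᵀτn)` of the theta series is the exponential of a function that is
affine in `u` and in `τ`, so the heat equation holds term by term: `∂_{u_i} ∂_{u_j}` multiplies
the term by `(2πi n_i)(2πi n_j)`, and the derivative in the direction `τ + sA` multiplies it by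
`πi nᵀAn = (1/4πi) Σ A_ij (2πi n_i)(2πi n_j)`.

Termwise differentiation is legitimate because `Im τ ≥ c > 0` gives the Gaussian majorant
`exp (2πM |n|₁ - πc |n|²)` of the terms, where `M` bounds the `|Im u_i|`. It survives
multiplication by `exp (a |n|₁)`, and by `exp (b |n|²)` for `b < πc`, which is what moving `u`,
resp. `τ`, within a small complex disc costs; a uniformly convergent series of holomorphic
functions can be differentiated termwise.
-/

open Real

theorem Matrix.PosDef.exists_pos_mul_dotProduct_self_le {n : Type*} [Fintype n] [DecidableEq n]
    {M : Matrix n n ℝ} (hM : M.PosDef) : ∃ r > 0, ∀ x : n → ℝ, r * (x ⬝ᵥ x) ≤ x ⬝ᵥ M *ᵥ x := by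
  open scoped MatrixOrder in
  cases isEmpty_or_nonempty n
  · exact ⟨1, one_pos, fun x => by simp [dotProduct]⟩
  obtain ⟨r, hr, hle⟩ : ∃ r > 0, algebraMap ℝ (Matrix n n ℝ) r ≤ M :=
    (CFC.exists_pos_algebraMap_le_iff hM.isStrictlyPositive.isSelfAdjoint).2
      fun x hx => hM.isStrictlyPositive.spectrum_pos hx
  refine ⟨r, hr, fun x => ?_⟩
  simpa [sub_mulVec, dotProduct_sub, Algebra.algebraMap_eq_smul_one, smul_mulVec, dotProduct_smul]
    using (Matrix.le_iff.mp hle).dotProduct_mulVec_nonneg x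

theorem summable_exp_mul_abs_sub_mul_sq (a : ℝ) {b : ℝ} (hb : 0 < b) :
    Summable fun m : ℤ => rexp (a * |(m : ℝ)| - b * (m : ℝ) ^ 2) := by
  refine (summable_pow_mul_jacobiTheta₂_term_bound (a / (2 * π)) (T := b / π)
    (by positivity) 0).congr fun m => ?_
  rw [pow_zero, one_mul, Int.cast_abs]
  congr 1
  field_simp
  ring

theorem summable_prod_apply {α : Type*} {f : α → ℝ} (hf0 : 0 ≤ f) (hf : Summable f) :
    ∀ g : ℕ, Summable fun n : Fin g → α => ∏ i, f (n i)
  | 0 => .of_finite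
  | g + 1 => by
    rw [← (Fin.consEquiv fun _ : Fin (g + 1) => α).summable_iff]
    refine (hf.mul_of_nonneg (summable_prod_apply hf0 hf g) hf0
      fun n => Finset.prod_nonneg fun i _ => hf0 _).congr fun p => ?_
    simp [Fin.consEquiv, Fin.prod_univ_succ]

theorem summable_exp_sum_mul_abs_sub_mul_sq (g : ℕ) (a : ℝ) {b : ℝ} (hb : 0 < b) :
    Summable fun n : Fin g → ℤ => rexp (∑ i, (a * |(n i : ℝ)| - b * (n i : ℝ) ^ 2)) := by
  simpa only [Real.exp_sum] using
    summable_prod_apply (fun m => (Real.exp_pos _).le) (summable_exp_mul_abs_sub_mul_sq a hb) g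

theorem hasDerivAt_tsum_mul_cexp {ι : Type*} {f μ : ι → ℂ} {r : ℝ} (hr : 0 < r)
    (hs : Summable fun i => ‖f i‖ * rexp (r * ‖μ i‖)) :
    HasDerivAt (fun z => ∑' i, f i * cexp (μ i * z)) (∑' i, μ i * f i) 0 := by
  have hF (i : ι) (z : ℂ) :
      HasDerivAt (fun z => f i * cexp (μ i * z)) (f i * (cexp (μ i * z) * μ i)) z := by
    simpa using (((hasDerivAt_id z).const_mul (μ i)).cexp).const_mul (f i)
  have hbound (i : ι) (z : ℂ) (hz : z ∈ Metric.ball 0 r) :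
      ‖f i * cexp (μ i * z)‖ ≤ ‖f i‖ * rexp (r * ‖μ i‖) := by
    rw [norm_mul, Complex.norm_exp]
    gcongr
    calc (μ i * z).re ≤ ‖μ i * z‖ := Complex.re_le_norm _
      _ = ‖z‖ * ‖μ i‖ := by rw [norm_mul, mul_comm]
      _ ≤ r * ‖μ i‖ := by gcongr; exact (mem_ball_zero_iff.mp hz).le
  have hdiff (i : ι) : DifferentiableOn ℂ (fun z => f i * cexp (μ i * z)) (Metric.ball 0 r) :=
    fun z _ => (hF i z).differentiableAt.differentiableWithinAt
  have h0 : (0 : ℂ) ∈ Metric.ball 0 r := Metric.mem_ball_self hr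
  have hsum := hasSum_deriv_of_summable_norm hs hdiff Metric.isOpen_ball hbound h0
  have hda := (differentiableOn_tsum_of_summable_norm hs hdiff Metric.isOpen_ball hbound
    ).differentiableAt (Metric.isOpen_ball.mem_nhds h0)
  have hderiv := hda.hasDerivAt
  rw [← hsum.tsum_eq] at hderiv
  simpa [(hF _ 0).deriv, mul_comm] using hderiv

theorem norm_sum_sum_mul_mul_le {ι : Type*} [Fintype ι] (A : Matrix ι ι ℂ) (x : ι → ℝ) :
    ‖∑ i, ∑ j, (x i : ℂ) * A i j * x j‖ ≤ (∑ i, ∑ j, ‖A i j‖) * ∑ k, x k ^ 2 := by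
  have hx (i j : ι) : |x i| * |x j| ≤ ∑ k, x k ^ 2 := by
    have hi := Finset.single_le_sum (fun k _ => sq_nonneg (x k)) (Finset.mem_univ i)
    have hj := Finset.single_le_sum (fun k _ => sq_nonneg (x k)) (Finset.mem_univ j)
    nlinarith [two_mul_le_add_sq |x i| |x j|, sq_abs (x i), sq_abs (x j)]
  calc ‖∑ i, ∑ j, (x i : ℂ) * A i j * x j‖ ≤ ∑ i, ∑ j, ‖A i j‖ * (|x i| * |x j|) := by
        refine (norm_sum_le _ _).trans (Finset.sum_le_sum fun i _ => ?_)
        refine (norm_sum_le _ _).trans_eq (Finset.sum_congr rfl fun j _ => ?_)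
        simp only [norm_mul, Complex.norm_real, Real.norm_eq_abs]
        ring
    _ ≤ ∑ i, ∑ j, ‖A i j‖ * ∑ k, x k ^ 2 := by gcongr with i _ j _; exact hx i j
    _ = (∑ i, ∑ j, ‖A i j‖) * ∑ k, x k ^ 2 := by simp only [Finset.sum_mul]

theorem norm_riemannThetaTerm {g : ℕ} (τ : Matrix (Fin g) (Fin g) ℂ) (u : Fin g → ℂ)
    (n : Fin g → ℤ) :
    ‖riemannThetaTerm τ u n‖ = rexp (-(2 * π) * ∑ i, (n i : ℝ) * (u i).im
      - π * ∑ i, ∑ j, (n i : ℝ) * (τ i j).im * n j) := by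
  rw [riemannThetaTerm, Complex.norm_exp]
  congr 1
  simp [Complex.mul_re, Complex.mul_im, Complex.im_sum, Complex.re_sum]
  ring

theorem riemannThetaTerm_add_smul_single {g : ℕ} (τ : Matrix (Fin g) (Fin g) ℂ)
    (v : Fin g → ℂ) (n : Fin g → ℤ) (j : Fin g) (t : ℂ) :
    riemannThetaTerm τ (v + t • Pi.single j 1) n
      = riemannThetaTerm τ v n * cexp (2 * π * I * n j * t) := by
  rw [riemannThetaTerm, riemannThetaTerm, ← Complex.exp_add]
  congr 1
  simp only [Pi.add_apply, Pi.smul_apply, smul_eq_mul, mul_add, Finset.sum_add_distrib,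
    Pi.single_apply, mul_ite, mul_one, mul_zero, Finset.sum_ite_eq', Finset.mem_univ, if_true]
  ring

theorem riemannThetaTerm_add_smul {g : ℕ} (τ A : Matrix (Fin g) (Fin g) ℂ) (u : Fin g → ℂ)
    (n : Fin g → ℤ) (z : ℂ) :
    riemannThetaTerm (τ + z • A) u n
      = riemannThetaTerm τ u n * cexp (π * I * (∑ i, ∑ j, (n i : ℂ) * A i j * n j) * z) := by
  rw [riemannThetaTerm, riemannThetaTerm, ← Complex.exp_add]
  congr 1
  simp only [Matrix.add_apply, Matrix.smul_apply, smul_eq_mul, mul_add, add_mul,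
    Finset.sum_add_distrib, Finset.mul_sum, Finset.sum_mul]
  rw [add_assoc]
  congr 2
  exact Finset.sum_congr rfl fun i _ => Finset.sum_congr rfl fun j _ => by ring

def ImCoercive {g : ℕ} (τ : Matrix (Fin g) (Fin g) ℂ) (c : ℝ) : Prop :=
  ∀ x : Fin g → ℝ, c * ∑ i, x i ^ 2 ≤ ∑ i, ∑ j, x i * (τ i j).im * x j

theorem exists_pos_imCoercive {g : ℕ} {τ : Matrix (Fin g) (Fin g) ℂ}
    (hpos : (Matrix.of fun i j => (τ i j).im).PosDef) : ∃ c > 0, ImCoercive τ c := by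
  obtain ⟨c, hc, hle⟩ := hpos.exists_pos_mul_dotProduct_self_le
  refine ⟨c, hc, fun x => ?_⟩
  simpa [dotProduct, mulVec, Finset.mul_sum, sq, mul_assoc] using hle x

section
variable {g : ℕ} {τ : Matrix (Fin g) (Fin g) ℂ} {c : ℝ}

theorem ImCoercive.norm_riemannThetaTerm_le (hτ : ImCoercive τ c) {u : Fin g → ℂ} {M : ℝ}
    (hM : ∀ i, |(u i).im| ≤ M) (n : Fin g → ℤ) :
    ‖riemannThetaTerm τ u n‖
      ≤ rexp (2 * π * M * ∑ i, |(n i : ℝ)| - π * c * ∑ i, (n i : ℝ) ^ 2) := by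
  rw [norm_riemannThetaTerm, Real.exp_le_exp]
  gcongr ?_ - ?_
  · calc -(2 * π) * ∑ i, (n i : ℝ) * (u i).im = 2 * π * ∑ i, -((n i : ℝ) * (u i).im) := by
          rw [Finset.sum_neg_distrib]; ring
      _ ≤ 2 * π * ∑ i, M * |(n i : ℝ)| := by
          gcongr with i
          calc -((n i : ℝ) * (u i).im) ≤ |(n i : ℝ)| * |(u i).im| := by
                rw [← abs_mul]; exact neg_le_abs _
            _ ≤ M * |(n i : ℝ)| := by rw [mul_comm]; gcongr; exact hM i
      _ = 2 * π * M * ∑ i, |(n i : ℝ)| := by rw [← Finset.mul_sum]; ring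
  · rw [mul_assoc]
    gcongr
    exact hτ _

theorem ImCoercive.summable_exp_mul_norm_riemannThetaTerm (hτ : ImCoercive τ c)
    (u : Fin g → ℂ) (a : ℝ) {b : ℝ} (hb : b < π * c) :
    Summable fun n : Fin g → ℤ =>
      rexp (a * ∑ i, |(n i : ℝ)| + b * ∑ i, (n i : ℝ) ^ 2) * ‖riemannThetaTerm τ u n‖ := by
  set M := ∑ k, |(u k).im|
  have hM (i : Fin g) : |(u i).im| ≤ M :=
    Finset.single_le_sum (f := fun k => |(u k).im|) (fun k _ => abs_nonneg _) (Finset.mem_univ i)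
  refine (summable_exp_sum_mul_abs_sub_mul_sq g (a + 2 * π * M) (sub_pos.2 hb)).of_nonneg_of_le
    (fun n => by positivity) fun n => ?_
  calc _ ≤ rexp (a * ∑ i, |(n i : ℝ)| + b * ∑ i, (n i : ℝ) ^ 2)
        * rexp (2 * π * M * ∑ i, |(n i : ℝ)| - π * c * ∑ i, (n i : ℝ) ^ 2) := by
        gcongr; exact hτ.norm_riemannThetaTerm_le hM n
    _ = _ := by
        rw [← Real.exp_add]
        congr 1
        simp only [Finset.mul_sum, ← Finset.sum_add_distrib, ← Finset.sum_sub_distrib]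
        exact Finset.sum_congr rfl fun i _ => by ring

theorem ImCoercive.summable_mul_riemannThetaTerm (hτ : ImCoercive τ c) (hc : 0 < c)
    {P : (Fin g → ℤ) → ℂ} {a : ℝ} (hP : ∀ n, ‖P n‖ ≤ rexp (a * ∑ i, |(n i : ℝ)|))
    (u : Fin g → ℂ) : Summable fun n => P n * riemannThetaTerm τ u n := by
  refine Summable.of_norm_bounded
    (hτ.summable_exp_mul_norm_riemannThetaTerm u a (b := 0) (by positivity)) fun n => ?_
  rw [norm_mul, zero_mul, add_zero]
  gcongr
  exact hP n

theorem norm_two_pi_I_mul_intCast_le (n : Fin g → ℤ) (j : Fin g) :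
    ‖2 * π * I * (n j : ℂ)‖ ≤ 2 * π * ∑ i, |(n i : ℝ)| := by
  rw [norm_mul, norm_mul, norm_mul, Complex.norm_two, Complex.norm_real, Complex.norm_I,
    norm_intCast, Real.norm_of_nonneg pi_pos.le, mul_one]
  gcongr
  exact Finset.single_le_sum (f := fun i => |(n i : ℝ)|) (fun i _ => abs_nonneg _)
    (Finset.mem_univ j)

theorem norm_two_pi_I_mul_intCast_le_exp (n : Fin g → ℤ) (j : Fin g) :
    ‖2 * π * I * (n j : ℂ)‖ ≤ rexp (2 * π * ∑ i, |(n i : ℝ)|) :=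
  (norm_two_pi_I_mul_intCast_le n j).trans <| by
    linarith [Real.add_one_le_exp (2 * π * ∑ i, |(n i : ℝ)|)]

theorem ImCoercive.pderivAlong_tsum_mul_riemannThetaTerm (hτ : ImCoercive τ c) (hc : 0 < c)
    {P : (Fin g → ℤ) → ℂ} {a : ℝ} (hP : ∀ n, ‖P n‖ ≤ rexp (a * ∑ i, |(n i : ℝ)|))
    (j : Fin g) (v : Fin g → ℂ) :
    pderivAlong (fun v => ∑' n, P n * riemannThetaTerm τ v n) j v
      = ∑' n, 2 * π * I * n j * (P n * riemannThetaTerm τ v n) := by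
  have hs : Summable fun n =>
      ‖P n * riemannThetaTerm τ v n‖ * rexp (1 * ‖2 * π * I * (n j : ℂ)‖) := by
    refine (hτ.summable_exp_mul_norm_riemannThetaTerm v (a + 2 * π) (b := 0)
      (by positivity)).of_nonneg_of_le (fun n => by positivity) fun n => ?_
    calc _ ≤ rexp (a * ∑ i, |(n i : ℝ)|) * ‖riemannThetaTerm τ v n‖
          * rexp (2 * π * ∑ i, |(n i : ℝ)|) := by
          rw [norm_mul, one_mul]
          gcongr
          exacts [hP n, norm_two_pi_I_mul_intCast_le n j]
      _ = _ := by rw [zero_mul, add_zero, add_mul, Real.exp_add]; ring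
  have hderiv := hasDerivAt_tsum_mul_cexp one_pos hs
  simp only [riemannThetaTerm_add_smul_single, pderivAlong, ← mul_assoc] at hderiv ⊢
  exact hderiv.deriv

theorem ImCoercive.pderivAlong_riemannTheta (hτ : ImCoercive τ c) (hc : 0 < c) (j : Fin g)
    (v : Fin g → ℂ) :
    pderivAlong (riemannTheta τ) j v = ∑' n, 2 * π * I * n j * riemannThetaTerm τ v n := by
  have h := hτ.pderivAlong_tsum_mul_riemannThetaTerm hc (P := fun _ => 1) (a := 0) (by simp) j v
  simp only [one_mul] at h
  exact h

theorem ImCoercive.pderivAlong_pderivAlong_riemannTheta (hτ : ImCoercive τ c) (hc : 0 < c)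
    (i j : Fin g) (u : Fin g → ℂ) :
    pderivAlong (fun v => pderivAlong (riemannTheta τ) j v) i u
      = ∑' n, 2 * π * I * n i * (2 * π * I * n j * riemannThetaTerm τ u n) := by
  simp only [hτ.pderivAlong_riemannTheta hc]
  exact hτ.pderivAlong_tsum_mul_riemannThetaTerm hc (norm_two_pi_I_mul_intCast_le_exp · j) i u

theorem ImCoercive.hasDerivAt_riemannTheta_add_smul (hτ : ImCoercive τ c) (hc : 0 < c)
    (A : Matrix (Fin g) (Fin g) ℂ) (u : Fin g → ℂ) :
    HasDerivAt (fun z : ℂ => riemannTheta (τ + z • A) u)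
      (∑' n, π * I * (∑ i, ∑ j, (n i : ℂ) * A i j * n j) * riemannThetaTerm τ u n) 0 := by
  set K := ∑ i, ∑ j, ‖A i j‖
  -- `‖πi nᵀAn‖ ≤ πK |n|²`, so for `|z| < r` the factor `exp (πi nᵀAn z)` only spends the
  -- fraction `rK / c < 1` of the Gaussian decay `exp (-πc |n|²)` of the terms.
  set r := c / (K + 1)
  have hrK : r * K < c := by
    rw [div_mul_eq_mul_div, div_lt_iff₀ (by positivity)]
    exact mul_lt_mul_of_pos_left (lt_add_one K) hc
  have hs : Summable fun n : Fin g → ℤ => ‖riemannThetaTerm τ u n‖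
      * rexp (r * ‖π * I * (∑ i, ∑ j, (n i : ℂ) * A i j * n j)‖) := by
    refine (hτ.summable_exp_mul_norm_riemannThetaTerm u 0 (b := r * π * K)
      (by nlinarith [pi_pos])).of_nonneg_of_le (fun n => by positivity) fun n => ?_
    rw [zero_mul, zero_add, mul_comm (rexp _)]
    gcongr ‖_‖ * rexp ?_
    have hQ := norm_sum_sum_mul_mul_le A fun i => (n i : ℝ)
    push_cast at hQ
    rw [norm_mul, norm_mul, Complex.norm_real, Complex.norm_I, Real.norm_of_nonneg pi_pos.le,
      mul_one]
    calc r * (π * ‖∑ i, ∑ j, (n i : ℂ) * A i j * n j‖)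
          ≤ r * (π * (K * ∑ k, (n k : ℝ) ^ 2)) := by gcongr
      _ = r * π * K * ∑ k, (n k : ℝ) ^ 2 := by ring
  simpa only [riemannTheta, riemannThetaTerm_add_smul] using
    hasDerivAt_tsum_mul_cexp (by positivity) hs

end

theorem riemannThetaTerm_heat_identity {g : ℕ} (A : Matrix (Fin g) (Fin g) ℂ)
    (n : Fin g → ℤ) (t : ℂ) :
    1 / (4 * π * I) * ∑ i, ∑ j, A i j * (2 * π * I * n i * (2 * π * I * n j * t))
      = π * I * (∑ i, ∑ j, (n i : ℂ) * A i j * n j) * t := by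
  simp only [Finset.mul_sum, Finset.sum_mul]
  refine Finset.sum_congr rfl fun i _ => Finset.sum_congr rfl fun j _ => ?_
  field_simp
  ring

theorem ImCoercive.sum_mul_pderivAlong_pderivAlong_riemannTheta {g : ℕ}
    {τ : Matrix (Fin g) (Fin g) ℂ} {c : ℝ} (hτ : ImCoercive τ c) (hc : 0 < c)
    (A : Matrix (Fin g) (Fin g) ℂ) (u : Fin g → ℂ) :
    1 / (4 * (π : ℂ) * I) * ∑ i, ∑ j, A i j *
        pderivAlong (fun v => pderivAlong (riemannTheta τ) j v) i u
      = ∑' n, π * I * (∑ i, ∑ j, (n i : ℂ) * A i j * n j) * riemannThetaTerm τ u n := by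
  have hsummable (i j : Fin g) : Summable fun n : Fin g → ℤ =>
      A i j * (2 * π * I * n i * (2 * π * I * n j * riemannThetaTerm τ u n)) := by
    refine ((hτ.summable_mul_riemannThetaTerm hc
      (P := fun n => 2 * π * I * n i * (2 * π * I * n j)) (a := 2 * π + 2 * π) (fun n => ?_)
      u).mul_left (A i j)).congr fun n => by ring
    rw [norm_mul, add_mul, Real.exp_add]
    gcongr <;> exact norm_two_pi_I_mul_intCast_le_exp n _
  calc _ = 1 / (4 * (π : ℂ) * I) * ∑' n, ∑ i, ∑ j,
        A i j * (2 * π * I * n i * (2 * π * I * n j * riemannThetaTerm τ u n)) := by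
        rw [Summable.tsum_finsetSum fun i _ => summable_sum fun j _ => hsummable i j]
        congr 1
        refine Finset.sum_congr rfl fun i _ => ?_
        rw [Summable.tsum_finsetSum fun j _ => hsummable i j]
        refine Finset.sum_congr rfl fun j _ => ?_
        rw [hτ.pderivAlong_pderivAlong_riemannTheta hc, tsum_mul_left]
    _ = _ := by
        rw [← tsum_mul_left]
        exact tsum_congr fun n => riemannThetaTerm_heat_identity A n _

theorem riemannTheta_heat_equation_general (g : ℕ)
    (τ : Matrix (Fin g) (Fin g) ℂ)
    (hpos : (Matrix.of fun i j => (τ i j).im).PosDef)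
    (A : Matrix (Fin g) (Fin g) ℂ)
    (u : Fin g → ℂ) :
    HasDerivAt (fun s : ℝ => riemannTheta (τ + (s : ℂ) • A) u)
      (1 / (4 * (Real.pi : ℂ) * Complex.I) *
        ∑ i, ∑ j, A i j *
          pderivAlong (fun v => pderivAlong (riemannTheta τ) j v) i u) 0 := by
  obtain ⟨c, hc, hτ⟩ := exists_pos_imCoercive hpos
  rw [hτ.sum_mul_pderivAlong_pderivAlong_riemannTheta hc A u]
  simpa using (hτ.hasDerivAt_riemannTheta_add_smul hc A u).comp_ofReal (z := 0)

/-- Heat equation for the Riemann theta function (directional form): for every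
symmetric `A`, the map `s ↦ θ(u | τ + sA)` is differentiable at `s = 0` with
derivative `(1/(4πi)) Σ_{i,j} A_{ij} ∂²θ/∂u_i∂u_j (u|τ)`. -/
theorem riemannTheta_heat_equation (g : ℕ) (hg : 1 ≤ g)
    (τ : Matrix (Fin g) (Fin g) ℂ) (hsym : τ.IsSymm)
    (hpos : (Matrix.of fun i j => (τ i j).im).PosDef)
    (A : Matrix (Fin g) (Fin g) ℂ) (hA : A.IsSymm)
    (u : Fin g → ℂ) :
    HasDerivAt (fun s : ℝ => riemannTheta (τ + (s : ℂ) • A) u)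
      (1 / (4 * (Real.pi : ℂ) * Complex.I) *
        ∑ i, ∑ j, A i j *
          pderivAlong (fun v => pderivAlong (riemannTheta τ) j v) i u) 0 :=
  riemannTheta_heat_equation_general g τ hpos A u
end
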